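/- arXiv:1511.05825 — 5 statements merged into one kernel-verified Lean document; each statement's English description precedes it below -/
import Mathlib

section
/- Let S = ℚ[X₁, X₂, …] with derivation D₊ defined by D₊(Xᵢ) = i X_{i+1}. Define Λ₀ = 1 and Λ_k = (1/k!)·(D₊ + L_{X₁})^{k−1}(X₁) for k ≥ 1, where L_{X₁} is multiplication by X₁. Then for every k ≥ 0, the operator identity (L_{X₁} + D₊)^k / k! = Σ_{s=0}^{k} L_{Λ_s} ∘ (D₊^{k−s}/(k−s)!) holds as linear maps on S. -/
/-! With `A = L_x + D`, the Leibniz rule reads `A ∘ L_p = L_{A p} + L_p ∘ D`. This is Pascal's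
recursion, so `A^n = ∑ C(n,i) L_{A^i 1} ∘ D^{n-i}` for any derivation `D` of a commutative algebra.
Since `A 1 = x`, Garland's elements are `Λ_s = A^s(1) / s!`, and dividing by `n!` gives the
identity. -/

open Finset LinearMap MvPolynomial
open scoped Nat

theorem LinearMap.mulLeft_smul {S R : Type*} [CommSemiring S] [Semiring R] [Algebra S R]
    (c : S) (p : R) : mulLeft S (c • p) = c • mulLeft S p := by
  ext q
  simp

namespace Derivation

section Binomial

variable {S R : Type*} [CommSemiring S] [CommSemiring R] [Algebra S R] (D : Derivation S R R)
  (x : R)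

theorem mulLeft_add_pow_succ_apply_one (n : ℕ) :
    ((mulLeft S x + D.toLinearMap) ^ (n + 1)) 1 = ((mulLeft S x + D.toLinearMap) ^ n) x := by
  simp [pow_succ]

theorem mulLeft_add_mul_mulLeft (p : R) :
    (mulLeft S x + D.toLinearMap) * mulLeft S p =
      mulLeft S ((mulLeft S x + D.toLinearMap) p) + mulLeft S p * D.toLinearMap := by
  ext q
  simp only [Module.End.mul_apply, mulLeft_apply, LinearMap.add_apply, coeFn_coe, leibniz,
    smul_eq_mul]
  ring

theorem mulLeft_add_pow (n : ℕ) :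
    (mulLeft S x + D.toLinearMap) ^ n = ∑ i ∈ range (n + 1), n.choose i •
      (mulLeft S (((mulLeft S x + D.toLinearMap) ^ i) 1) * D.toLinearMap ^ (n - i)) := by
  set A := mulLeft S x + D.toLinearMap
  induction n with
  | zero => simp; rfl
  | succ n ih =>
    rw [sum_choose_succ_nsmul (fun i j ↦ mulLeft S ((A ^ i) 1) * D.toLinearMap ^ j), pow_succ',
      ih, mul_sum, add_comm (∑ _ ∈ _, _), ← sum_add_distrib]
    refine sum_congr rfl fun i hi ↦ ?_
    have hsub : n + 1 - i = n - i + 1 := by have := mem_range.1 hi; omega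
    rw [mul_smul_comm, ← mul_assoc, mulLeft_add_mul_mulLeft, add_mul, mul_assoc, ← pow_succ',
      pow_succ' A, Module.End.mul_apply, hsub, smul_add]

end Binomial

section DividedPowers

variable {R : Type*} [CommRing R] [Algebra ℚ R] (D : Derivation ℚ R R) (x : R)

theorem inv_factorial_smul_mulLeft_add_pow (k : ℕ) :
    (k ! : ℚ)⁻¹ • (mulLeft ℚ x + D.toLinearMap) ^ k = ∑ s ∈ range (k + 1),
      ((k - s)! : ℚ)⁻¹ • (mulLeft ℚ ((s ! : ℚ)⁻¹ • ((mulLeft ℚ x + D.toLinearMap) ^ s) 1) ∘ₗ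
        D.toLinearMap ^ (k - s)) := by
  rw [mulLeft_add_pow, smul_sum]
  refine sum_congr rfl fun s hs ↦ ?_
  have hcoeff : (k ! : ℚ)⁻¹ * k.choose s = ((k - s)! : ℚ)⁻¹ * (s ! : ℚ)⁻¹ := by
    rw [Nat.cast_choose ℚ (mem_range_succ_iff.1 hs)]
    field_simp
  rw [LinearMap.mulLeft_smul, smul_comp, ← Module.End.mul_eq_comp, smul_smul, ← hcoeff, mul_smul,
    Nat.cast_smul_eq_nsmul]

end DividedPowers

end Derivation

theorem stmt4_general (D : Derivation ℚ (MvPolynomial ℕ+ ℚ) (MvPolynomial ℕ+ ℚ))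
    (Λ : ℕ → MvPolynomial ℕ+ ℚ)
    (hΛ0 : Λ 0 = 1)
    (hΛ : ∀ k : ℕ, 1 ≤ k → Λ k = (Nat.factorial k : ℚ)⁻¹ •
      (((LinearMap.mulLeft ℚ (X 1) + D.toLinearMap :
          Module.End ℚ (MvPolynomial ℕ+ ℚ)) ^ (k - 1)) (X 1)))
    (k : ℕ) :
    (Nat.factorial k : ℚ)⁻¹ •
        ((LinearMap.mulLeft ℚ (X 1) + D.toLinearMap :
          Module.End ℚ (MvPolynomial ℕ+ ℚ)) ^ k) =
      ∑ s ∈ Finset.range (k + 1),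
        (Nat.factorial (k - s) : ℚ)⁻¹ •
          (LinearMap.mulLeft ℚ (Λ s) ∘ₗ
            ((D.toLinearMap : Module.End ℚ (MvPolynomial ℕ+ ℚ)) ^ (k - s))) := by
  have hΛ_eq : ∀ s, Λ s = (s ! : ℚ)⁻¹ •
      ((mulLeft ℚ (X 1) + D.toLinearMap : Module.End ℚ (MvPolynomial ℕ+ ℚ)) ^ s) 1 := by
    rintro (_ | s)
    · simp [hΛ0]
    · rw [hΛ (s + 1) s.succ_pos, D.mulLeft_add_pow_succ_apply_one, Nat.add_sub_cancel]
  simp_rw [hΛ_eq]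
  exact D.inv_factorial_smul_mulLeft_add_pow (X 1) k

/-- Garland's operator identity: with `S = ℚ[X₁, X₂, …]`, `D₊` the derivation with
`D₊(Xᵢ) = iX_{i+1}`, `L` multiplication by `X₁`, `Λ₀ = 1` and
`Λ_k = (1/k!)(D₊ + L)^{k−1}(X₁)` for `k ≥ 1`, one has for every `k ≥ 0` the identity
`(L + D₊)^k / k! = ∑_{s=0}^{k} L_{Λ_s} ∘ (D₊^{k−s}/(k−s)!)` of linear maps on `S`. -/
theorem stmt4 (D : Derivation ℚ (MvPolynomial ℕ+ ℚ) (MvPolynomial ℕ+ ℚ))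
    (hD : ∀ i : ℕ+, D (X i) = ((i : ℕ) : ℚ) • X (i + 1))
    (Λ : ℕ → MvPolynomial ℕ+ ℚ)
    (hΛ0 : Λ 0 = 1)
    (hΛ : ∀ k : ℕ, 1 ≤ k → Λ k = (Nat.factorial k : ℚ)⁻¹ •
      (((LinearMap.mulLeft ℚ (X 1) + D.toLinearMap :
          Module.End ℚ (MvPolynomial ℕ+ ℚ)) ^ (k - 1)) (X 1)))
    (k : ℕ) :
    (Nat.factorial k : ℚ)⁻¹ •
        ((LinearMap.mulLeft ℚ (X 1) + D.toLinearMap :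
          Module.End ℚ (MvPolynomial ℕ+ ℚ)) ^ k) =
      ∑ s ∈ Finset.range (k + 1),
        (Nat.factorial (k - s) : ℚ)⁻¹ •
          (LinearMap.mulLeft ℚ (Λ s) ∘ₗ
            ((D.toLinearMap : Module.End ℚ (MvPolynomial ℕ+ ℚ)) ^ (k - s))) :=
  stmt4_general D Λ hΛ0 hΛ k
end

section
/- With S = ℚ[X₁, X₂, …], D₊ the derivation with D₊(Xᵢ) = iX_{i+1}, Λ₀ = 1 and Λ_k = (1/k!)(D₊ + L_{X₁})^{k−1}(X₁): for every k ≥ 1, the recursion Λ_k = (1/k)·Σ_{s=0}^{k−1} Λ_s · X_{k−s} holds in S. -/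
/-! With `E = L_{X₁} + D₊` one has `Λ_k = E^k(1)/k!`, hence `(k+1)Λ_{k+1} = X₁Λ_k + D₊Λ_k`.
For `P_k = ∑_{s<k} Λ_s X_{k-s}` the Leibniz rule gives
`(X₁ + D₊)P_k = ∑_{s<k} ((s+1)Λ_{s+1}X_{k-s} + (k-s)Λ_s X_{k+1-s}) = k P_{k+1}`,
the weights `s` and `k - s` of each `Λ_s X_{k+1-s}` adding up to `k`. So if `kΛ_k = P_k`, then
`k(k+1)Λ_{k+1} = k P_{k+1}`, and cancelling `k` gives the induction step. -/

open MvPolynomial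

open Nat in
lemma succ_nsmul_inv_factorial_smul_pow_succ_apply {M : Type*} [AddCommGroup M] [Module ℚ M]
    (f : Module.End ℚ M) (v : M) (k : ℕ) :
    (k + 1) • ((k + 1)! : ℚ)⁻¹ • (f ^ (k + 1)) v = f ((k ! : ℚ)⁻¹ • (f ^ k) v) := by
  rw [_root_.pow_succ', Module.End.mul_apply, map_smul, ← Nat.cast_smul_eq_nsmul ℚ, smul_smul]
  congr 1
  rw [Nat.factorial_succ]
  push_cast
  field_simp

section

variable {R A : Type*} [CommRing R] [CommRing A] [Algebra R A] (D : Derivation R A A)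
  {x Λ : ℕ → A}

lemma mul_sum_add_derivation_sum_eq_nsmul (hx : ∀ n, 0 < n → D (x n) = n • x (n + 1))
    (hΛ : ∀ k, (k + 1) • Λ (k + 1) = x 1 * Λ k + D (Λ k)) (k : ℕ) :
    x 1 * ∑ s ∈ Finset.range k, Λ s * x (k - s) + D (∑ s ∈ Finset.range k, Λ s * x (k - s)) =
      k • ∑ s ∈ Finset.range (k + 1), Λ s * x (k + 1 - s) := by
  have term : ∀ s ∈ Finset.range k, x 1 * (Λ s * x (k - s)) + D (Λ s * x (k - s)) =
      (s + 1) • (Λ (s + 1) * x (k + 1 - (s + 1))) + (k - s) • (Λ s * x (k + 1 - s)) := by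
    intro s hs
    have hs : s < k := Finset.mem_range.mp hs
    rw [Nat.add_sub_add_right, ← smul_mul_assoc, hΛ, Derivation.leibniz, hx _ (by omega),
      show k - s + 1 = k + 1 - s by omega]
    simp only [smul_eq_mul, mul_smul_comm]
    ring
  rw [map_sum, Finset.mul_sum, ← Finset.sum_add_distrib, Finset.sum_congr rfl term,
    Finset.sum_add_distrib]
  have shifted : ∑ s ∈ Finset.range k, (s + 1) • (Λ (s + 1) * x (k + 1 - (s + 1))) =
      ∑ t ∈ Finset.range (k + 1), t • (Λ t * x (k + 1 - t)) := by
    simp [Finset.sum_range_succ' _ k]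
  have extended : ∑ s ∈ Finset.range k, (k - s) • (Λ s * x (k + 1 - s)) =
      ∑ s ∈ Finset.range (k + 1), (k - s) • (Λ s * x (k + 1 - s)) := by
    simp [Finset.sum_range_succ _ k]
  rw [shifted, extended, ← Finset.sum_add_distrib, Finset.smul_sum]
  refine Finset.sum_congr rfl fun s hs => ?_
  rw [← add_smul, Nat.add_sub_cancel' (Finset.mem_range_succ_iff.mp hs)]

lemma nsmul_eq_sum_range_mul_sub [IsAddTorsionFree A]
    (hx : ∀ n, 0 < n → D (x n) = n • x (n + 1)) (hΛ0 : Λ 0 = 1)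
    (hΛ : ∀ k, (k + 1) • Λ (k + 1) = x 1 * Λ k + D (Λ k)) (k : ℕ) :
    k • Λ k = ∑ s ∈ Finset.range k, Λ s * x (k - s) := by
  induction k with
  | zero => simp
  | succ k ih =>
    rcases Nat.eq_zero_or_pos k with rfl | hk
    · simpa [hΛ0] using hΛ 0
    · rw [← nsmul_right_inj hk.ne', hΛ, ← mul_sum_add_derivation_sum_eq_nsmul D hx hΛ, ← ih,
        mul_smul_comm, map_nsmul, smul_add]

end

/-- With `S = ℚ[X₁, X₂, …]`, `D₊` the derivation with `D₊(Xᵢ) = iX_{i+1}`, `Λ₀ = 1` and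
`Λ_k = (1/k!)(D₊ + L_{X₁})^{k−1}(X₁)`: for every `k ≥ 1`,
`Λ_k = (1/k)·∑_{s=0}^{k−1} Λ_s·X_{k−s}`. -/
theorem stmt5 (D : Derivation ℚ (MvPolynomial ℕ+ ℚ) (MvPolynomial ℕ+ ℚ))
    (hD : ∀ i : ℕ+, D (X i) = ((i : ℕ) : ℚ) • X (i + 1))
    (Λ : ℕ → MvPolynomial ℕ+ ℚ)
    (hΛ0 : Λ 0 = 1)
    (hΛ : ∀ k : ℕ, 1 ≤ k → Λ k = (Nat.factorial k : ℚ)⁻¹ •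
      (((LinearMap.mulLeft ℚ (X 1) + D.toLinearMap :
          Module.End ℚ (MvPolynomial ℕ+ ℚ)) ^ (k - 1)) (X 1)))
    (k : ℕ) (hk : 1 ≤ k) :
    Λ k = ((k : ℚ)⁻¹) •
      ∑ s ∈ (Finset.range k).attach,
        Λ s.1 * (X (⟨k - s.1, by have := Finset.mem_range.mp s.2; omega⟩ : ℕ+) : MvPolynomial ℕ+ ℚ) := by
  set E : Module.End ℚ (MvPolynomial ℕ+ ℚ) := LinearMap.mulLeft ℚ (X 1) + D.toLinearMap
  have hΛE : ∀ k, Λ k = (k.factorial : ℚ)⁻¹ • (E ^ k) 1 := by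
    rintro (_ | k)
    · simp [hΛ0]
    · rw [hΛ _ k.succ_pos, pow_succ, Module.End.mul_apply]
      simp [E]
  have hrec : ∀ k, (k + 1) • Λ (k + 1) = X 1 * Λ k + D (Λ k) := fun k => by
    rw [hΛE, hΛE, succ_nsmul_inv_factorial_smul_pow_succ_apply]
    rfl
  have hx : ∀ n, 0 < n → D (X n.toPNat') = n • X (n + 1).toPNat' := fun n hn => by
    have hsucc : n.toPNat' + 1 = (n + 1).toPNat' := PNat.eq (by simp [PNat.toPNat'_coe hn])
    rw [hD, hsucc, PNat.toPNat'_coe hn, Nat.cast_smul_eq_nsmul]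
  have hsum : ∑ s ∈ (Finset.range k).attach,
      Λ s.1 * (X (⟨k - s.1, by have := Finset.mem_range.mp s.2; omega⟩ : ℕ+) : MvPolynomial ℕ+ ℚ) =
      k • Λ k := by
    rw [nsmul_eq_sum_range_mul_sub D hx hΛ0 hrec,
      ← Finset.sum_attach (Finset.range k) (fun s => Λ s * X (k - s).toPNat')]
    refine Finset.sum_congr rfl fun s _ => ?_
    have hs := Finset.mem_range.mp s.2
    congr 2
    exact PNat.eq (PNat.toPNat'_coe (n := k - s) (by omega)).symm
  rw [hsum, ← Nat.cast_smul_eq_nsmul ℚ, smul_smul,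
    inv_mul_cancel₀ (Nat.cast_ne_zero.mpr (by omega)), one_smul]
end

section
/- Let t, t′ be natural numbers. Then the polynomial identity (x choose t′)·(x choose t) = (t+t′ choose t)·(x choose t+t′) − Σ_{j=1}^{t′} (−1)^j (t+j−1 choose j)·(x choose t′−j)·(x choose t) holds in ℚ[x], where (x choose s) denotes the polynomial x(x−1)⋯(x−s+1)/s!. -/
/-!
In the binomial ring `ℚ[X]` we have `chPoly s = Ring.choose X s`. Then
`(x choose t) (x - t choose t') = (t + t' choose t) (x choose t + t')`, while Chu–Vandermonde
applied to `x - t = -t + x`, together with `(-t choose j) = (-1)^j (t + j - 1 choose j)`, gives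
`(x - t choose t') = ∑_{j ≤ t'} (-1)^j (t + j - 1 choose j) (x choose t' - j)`.
Multiplying by `(x choose t)` and splitting off the term `j = 0` yields the identity.
-/

open Polynomial

/-- The binomial coefficient polynomial `(x choose s) = x(x-1)⋯(x-s+1)/s! ∈ ℚ[x]`. -/
noncomputable def chPoly (s : ℕ) : Polynomial ℚ := ((Nat.factorial s : ℚ)⁻¹) • descPochhammer ℚ s

namespace Ring

variable {R : Type*} [Ring R] [BinomialRing R]

theorem choose_neg_natCast (t j : ℕ) :
    choose (-(t : R)) j = (-1) ^ j * ((t + j - 1).choose j : R) := by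
  rcases Nat.eq_zero_or_pos j with rfl | hj
  · simp
  have hcast : (t : R) + j - 1 = ((t + j - 1 : ℕ) : R) := by
    rw [Nat.cast_sub (by omega)]
    push_cast
    rfl
  rw [choose_neg, hcast, choose_natCast, Units.smul_def, zsmul_eq_mul,
    Int.cast_negOnePow_natCast]

theorem choose_sub_natCast (r : R) (t k : ℕ) :
    choose (r - t) k = ∑ j ∈ Finset.range (k + 1),
      (-1) ^ j * ((t + j - 1).choose j : R) * choose r (k - j) := by
  rw [sub_eq_neg_add, add_choose_eq k ((Nat.cast_commute t r).neg_left),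
    Finset.Nat.sum_antidiagonal_eq_sum_range_succ_mk]
  simp only [choose_neg_natCast]

end Ring

theorem chPoly_eq_choose_X (s : ℕ) : chPoly s = Ring.choose (X : ℚ[X]) s := by
  have h := Ring.descPochhammer_eq_factorial_smul_choose (X : ℚ[X]) s
  rw [← aeval_eq_smeval, ← aeval_map_algebraMap ℚ, descPochhammer_map, aeval_X_left_apply,
    ← Nat.cast_smul_eq_nsmul ℚ] at h
  rw [chPoly, h, inv_smul_smul₀ (by positivity)]

theorem choose_smul_chPoly_add (t t' : ℕ) :
    ((t + t').choose t : ℚ) • chPoly (t + t') = chPoly t * Ring.choose (X - (t : ℚ[X])) t' := by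
  rw [Nat.cast_smul_eq_nsmul, chPoly_eq_choose_X, chPoly_eq_choose_X,
    Ring.choose_smul_choose _ (Nat.le_add_right t t'), Nat.add_sub_cancel_left]

theorem choose_X_sub_natCast (t k : ℕ) :
    Ring.choose (X - (t : ℚ[X])) k = ∑ j ∈ Finset.range (k + 1),
      ((-1 : ℚ) ^ j * ((t + j - 1).choose j : ℚ)) • chPoly (k - j) := by
  simp only [Ring.choose_sub_natCast, chPoly_eq_choose_X, Algebra.smul_def, map_mul, map_pow,
    map_neg, map_one, map_natCast]

/-- Lusztig's identity: for `t, t' ∈ ℕ`,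
`(x choose t')(x choose t) = (t+t' choose t)(x choose t+t')
  − ∑_{j=1}^{t'} (−1)^j (t+j−1 choose j)(x choose t'−j)(x choose t)` in `ℚ[x]`. -/
theorem stmt11 (t t' : ℕ) :
    chPoly t' * chPoly t =
      ((t + t').choose t : ℚ) • chPoly (t + t') -
        ∑ j ∈ Finset.Icc 1 t',
          ((-1 : ℚ) ^ j * ((t + j - 1).choose j : ℚ)) • (chPoly (t' - j) * chPoly t) := by
  rw [eq_sub_iff_add_eq, choose_smul_chPoly_add, choose_X_sub_natCast, Finset.range_eq_Ico,
    Finset.sum_eq_sum_Ico_succ_bot t'.add_one_pos, zero_add, Finset.Ico_add_one_right_eq_Icc,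
    mul_add, Finset.mul_sum]
  simp [mul_comm]
end

section
/- Let p be a prime, h ≥ 1, and 𝕂 a field of characteristic p. Consider the 𝕂-subspace V of functions ℤ → 𝕂 spanned by the functions x ↦ (x choose t) mod p, for 0 ≤ t < p^h. Then V is closed under pointwise multiplication, i.e. V is a 𝕂-subalgebra of the algebra of functions ℤ → 𝕂. -/
/-!
Vandermonde's identity gives `(x + p^h choose t) = ∑ (x choose i) (p^h choose j)` over `i + j = t`,
and `p ∣ (p^h choose j)` for `0 < j < p^h`, so for `t < p^h` each `x ↦ (x choose t)` is
`p^h`-periodic mod `p`. Conversely, by Newton's forward-difference formula every function agrees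
on `[0, p^h)` with a combination of these `p^h` binomial functions, hence every `p^h`-periodic
function lies in their span. So the span is exactly the algebra of `p^h`-periodic functions.
-/

open Finset Function fwdDiff

theorem Function.Periodic.eq_of_eqOn_Ico {α β : Type*} [AddCommGroup α] [LinearOrder α]
    [IsOrderedAddMonoid α] [Archimedean α] {f g : α → β} {c : α} (hf : Periodic f c)
    (hg : Periodic g c) (hc : 0 < c) (hfg : Set.EqOn f g (Set.Ico 0 c)) : f = g := by
  funext x
  obtain ⟨n, hn, -⟩ := existsUnique_zsmul_near_of_pos' hc x
  rw [← hf.sub_zsmul_eq n, ← hg.sub_zsmul_eq n]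
  exact hfg hn

theorem Int.ringChoose_add_prime_pow_modEq {p h t : ℕ} (hp : p.Prime) (ht : t < p ^ h) (x : ℤ) :
    Ring.choose (x + (p ^ h : ℕ)) t ≡ Ring.choose x t [ZMOD p] := by
  rw [← CharP.intCast_eq_intCast (ZMod p), Ring.add_choose_eq t (Commute.all _ _), Int.cast_sum,
    sum_eq_single (t, 0)]
  · simp
  · rintro ⟨i, j⟩ hij hne
    rw [HasAntidiagonal.mem_antidiagonal] at hij
    have hj : j ≠ 0 := by rintro rfl; simp_all
    have hp_dvd : p ∣ (p ^ h).choose j := hp.dvd_choose_pow hj (by omega)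
    rw [Ring.choose_natCast, Int.cast_mul, Int.cast_natCast,
      (ZMod.natCast_eq_zero_iff _ _).2 hp_dvd, mul_zero]
  · simp

theorem ringChoose_periodic_of_charP {R : Type*} [AddGroupWithOne R] {p h t : ℕ} [CharP R p]
    (hp : p.Prime) (ht : t < p ^ h) :
    Periodic (fun x : ℤ => ((Ring.choose x t : ℤ) : R)) (p ^ h : ℕ) := fun x =>
  (CharP.intCast_eq_intCast R p).2 (Int.ringChoose_add_prime_pow_modEq hp ht x)

theorem eqOn_sum_fwdDiff_iter_smul_ringChoose {R : Type*} [CommRing R] (f : ℤ → R) (N : ℕ) :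
    Set.EqOn f (∑ k ∈ range N, (Δ_[1])^[k] f 0 • fun x : ℤ => ((Ring.choose x k : ℤ) : R))
      (Set.Ico 0 N) := by
  rintro x ⟨hx0, hxN⟩
  lift x to ℕ using hx0
  have hnewton := shift_eq_sum_fwdDiff_iter 1 f x 0
  rw [zero_add, nsmul_one] at hnewton
  rw [hnewton, Finset.sum_apply]
  refine sum_subset (range_subset_range.2 (by omega)) ?_ |>.trans (sum_congr rfl fun k _ => ?_)
  · intro k _ hk
    simp [Nat.choose_eq_zero_of_lt (by simpa using hk : x < k)]
  · simp [Ring.choose_natCast, nsmul_eq_mul, mul_comm]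

section CharP

variable {R : Type*} [CommRing R] {p h : ℕ} [CharP R p]

theorem periodic_of_mem_span_ringChoose (hp : p.Prime) {f : ℤ → R}
    (hf : f ∈ Submodule.span R {g | ∃ t < p ^ h, g = fun x : ℤ => ((Ring.choose x t : ℤ) : R)}) :
    Periodic f (p ^ h : ℕ) := by
  induction hf using Submodule.span_induction with
  | mem g hg =>
    obtain ⟨t, ht, rfl⟩ := hg
    exact ringChoose_periodic_of_charP hp ht
  | zero => exact fun _ => rfl
  | add f g _ _ hf hg => exact hf.add hg
  | smul c f _ hf => exact hf.smul c

theorem mem_span_ringChoose_iff_periodic (hp : p.Prime) {f : ℤ → R} :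
    f ∈ Submodule.span R {g | ∃ t < p ^ h, g = fun x : ℤ => ((Ring.choose x t : ℤ) : R)} ↔
      Periodic f (p ^ h : ℕ) := by
  refine ⟨periodic_of_mem_span_ringChoose hp, fun hf => ?_⟩
  set interpolant := ∑ k ∈ range (p ^ h), (Δ_[1])^[k] f 0 • fun x : ℤ => ((Ring.choose x k : ℤ) : R)
  have hmem : interpolant ∈ Submodule.span R
      {g | ∃ t < p ^ h, g = fun x : ℤ => ((Ring.choose x t : ℤ) : R)} :=
    Submodule.sum_mem _ fun k hk =>
      Submodule.smul_mem _ _ (Submodule.subset_span ⟨k, mem_range.1 hk, rfl⟩)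
  have hfeq : f = interpolant :=
    hf.eq_of_eqOn_Ico (periodic_of_mem_span_ringChoose hp hmem) (by simp [hp.pos])
      (eqOn_sum_fwdDiff_iter_smul_ringChoose f _)
  exact hfeq ▸ hmem

end CharP

theorem stmt12_general (p : ℕ) (hp : p.Prime) (h : ℕ)
    (𝕂 : Type*) [Field 𝕂] [CharP 𝕂 p] :
    ∀ f ∈ Submodule.span 𝕂
        {f : ℤ → 𝕂 | ∃ t < p ^ h, f = fun x => ((Ring.choose x t : ℤ) : 𝕂)},
      ∀ g ∈ Submodule.span 𝕂
        {f : ℤ → 𝕂 | ∃ t < p ^ h, f = fun x => ((Ring.choose x t : ℤ) : 𝕂)},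
      f * g ∈ Submodule.span 𝕂
        {f : ℤ → 𝕂 | ∃ t < p ^ h, f = fun x => ((Ring.choose x t : ℤ) : 𝕂)} := by
  intro f hf g hg
  rw [mem_span_ringChoose_iff_periodic hp] at hf hg ⊢
  exact hf.mul hg

/-- Let `p` be a prime, `h ≥ 1`, and `𝕂` a field of characteristic `p`. The
`𝕂`-subspace `V` of functions `ℤ → 𝕂` spanned by `x ↦ (x choose t) mod p` for
`0 ≤ t < p^h` is closed under pointwise multiplication. -/
theorem stmt12 (p : ℕ) (hp : p.Prime) (h : ℕ) (hh : 1 ≤ h)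
    (𝕂 : Type*) [Field 𝕂] [CharP 𝕂 p] :
    ∀ f ∈ Submodule.span 𝕂
        {f : ℤ → 𝕂 | ∃ t < p ^ h, f = fun x => ((Ring.choose x t : ℤ) : 𝕂)},
      ∀ g ∈ Submodule.span 𝕂
        {f : ℤ → 𝕂 | ∃ t < p ^ h, f = fun x => ((Ring.choose x t : ℤ) : 𝕂)},
      f * g ∈ Submodule.span 𝕂
        {f : ℤ → 𝕂 | ∃ t < p ^ h, f = fun x => ((Ring.choose x t : ℤ) : 𝕂)} :=
  stmt12_general p hp h 𝕂
end

section
/- Let 𝕂 be a commutative ring with 1, n ≥ 1, and let f : ℕ^n → 𝕂 be a finitely supported function. If Σ_{λ ∈ ℕ^n} f(λ) · ∏_{i=1}^{n} (μ_i choose λ_i) = 0 in 𝕂 for every μ ∈ ℕ^n, then f = 0. -/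
theorem Finset.prod_natCast_choose_eq_zero_of_not_le {ι R : Type*} [Fintype ι] [CommSemiring R]
    {μ lam : ι → ℕ} (h : ¬lam ≤ μ) : ∏ i, ((μ i).choose (lam i) : R) = 0 := by
  obtain ⟨i, hi⟩ := not_forall.mp h
  exact Finset.prod_eq_zero (Finset.mem_univ i) (by simp [Nat.choose_eq_zero_of_lt (not_le.mp hi)])

/-- Evaluating at a minimal `μ` of the support isolates the coefficient `f μ`, since the
product vanishes unless `lam ≤ μ`. -/
theorem Finsupp.eq_zero_of_sum_mul_prod_choose_eq_zero {ι R : Type*} [Fintype ι]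
    [CommSemiring R] (f : (ι → ℕ) →₀ R)
    (hf : ∀ μ : ι → ℕ, (f.sum fun lam c => c * ∏ i, ((μ i).choose (lam i) : R)) = 0) :
    f = 0 := by
  by_contra hf0
  obtain ⟨μ, hμ, hmin⟩ := Finset.exists_minimal (Finsupp.support_nonempty_iff.mpr hf0)
  have hsum : (f.sum fun lam c => c * ∏ i, ((μ i).choose (lam i) : R)) = f μ := by
    refine (Finset.sum_eq_single μ (fun lam hlam hne => ?_) (absurd hμ)).trans (by simp)
    have hnle : ¬lam ≤ μ := fun hle => hne (le_antisymm hle (hmin hlam hle))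
    dsimp only
    rw [Finset.prod_natCast_choose_eq_zero_of_not_le hnle, mul_zero]
  exact Finsupp.mem_support_iff.mp hμ (hsum ▸ hf μ)

theorem stmt13_general (𝕂 : Type*) [CommRing 𝕂] (n : ℕ)
    (f : (Fin n → ℕ) →₀ 𝕂)
    (hf : ∀ μ : Fin n → ℕ,
      (f.sum fun lam c => c * ∏ i, ((μ i).choose (lam i) : 𝕂)) = 0) :
    f = 0 :=
  Finsupp.eq_zero_of_sum_mul_prod_choose_eq_zero f hf

/-- Let `𝕂` be a commutative ring with 1, `n ≥ 1`, and `f : ℕ^n → 𝕂` a finitely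
supported function. If `∑_λ f(λ) ∏_i (μ_i choose λ_i) = 0` in `𝕂` for every `μ ∈ ℕ^n`,
then `f = 0`. -/
theorem stmt13 (𝕂 : Type*) [CommRing 𝕂] (n : ℕ) (hn : 1 ≤ n)
    (f : (Fin n → ℕ) →₀ 𝕂)
    (hf : ∀ μ : Fin n → ℕ,
      (f.sum fun lam c => c * ∏ i, ((μ i).choose (lam i) : 𝕂)) = 0) :
    f = 0 :=
  stmt13_general 𝕂 n f hf
end
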